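/- arXiv:2211.05279 — 4 statements merged into one kernel-verified Lean document; each statement's English description precedes it below -/
import Mathlib

section
/- Let p be an even integer. Then every continuous map f from the circle to itself that is (freely) homotopic to the p-th power map z ↦ z^p has a point z on the circle with f(z) = f(−z). (The Borsuk–Ulam property with respect to the antipodal involution holds for the homotopy class of z ↦ z^p when p is even.) -/
/-- The antipodal involution on the unit circle in `ℂ`, sending `z` to `-z`. -/
noncomputable def circleAntipode (z : Circle) : Circle :=
  ⟨-(z : ℂ), by simp [Submonoid.unitSphere, mem_sphere_zero_iff_norm, norm_neg, Circle.norm_coe]⟩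

open Complex Real

namespace BorsukUlamAux

noncomputable def negOne : Circle := Circle.exp π

lemma coe_negOne : ((negOne : Circle) : ℂ) = -1 := by
  simp [negOne, Circle.coe_exp, Complex.exp_pi_mul_I]

lemma negOne_mul_negOne : negOne * negOne = 1 := by
  ext
  simp [coe_negOne]

lemma inv_negOne : negOne⁻¹ = negOne :=
  inv_eq_of_mul_eq_one_right negOne_mul_negOne

lemma circle_mem_slitPlane {z : Circle} (hz : z ≠ negOne) : (z : ℂ) ∈ Complex.slitPlane := by
  rw [Complex.mem_slitPlane_iff_arg]
  refine ⟨fun hπ => hz ?_, z.coe_ne_zero⟩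
  rw [Complex.arg_eq_pi_iff] at hπ
  have h1 : Complex.normSq z = 1 := z.normSq_coe
  rw [Complex.normSq_apply, hπ.2, mul_zero, add_zero] at h1
  have hre : (z : ℂ).re = -1 := by nlinarith [hπ.1]
  ext
  rw [coe_negOne]
  exact Complex.ext (by rw [hre]; simp) (by rw [hπ.2]; simp)

lemma arg_inv_circle {z : Circle} (hz : z ≠ negOne) :
    Complex.arg ((z⁻¹ : Circle) : ℂ) = - Complex.arg z := by
  rw [Circle.coe_inv, Complex.arg_inv, if_neg]
  exact Complex.slitPlane_arg_ne_pi (circle_mem_slitPlane hz)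

lemma continuous_arg_comp {g : ℝ → Circle} (hg : Continuous g) (h : ∀ t, g t ≠ negOne) :
    Continuous fun t => Complex.arg (g t) := by
  rw [continuous_iff_continuousAt]
  intro t
  exact ((Complex.continuousAt_arg (circle_mem_slitPlane (h t))).comp
    continuous_subtype_val.continuousAt).comp hg.continuousAt

lemma eq_of_continuous_int_mul {g : ℝ → ℝ} (hg : Continuous g)
    (h : ∀ t, ∃ n : ℤ, g t = n * (2 * π)) (t : ℝ) : g t = g 0 := by
  have hU : IsClopen {t | g t = g 0} := by
    constructor
    · exact isClosed_eq hg continuous_const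
    · rw [isOpen_iff_mem_nhds]
      intro a ha
      have hev : ∀ᶠ b in nhds a, |g b - g a| < 2 * π := by
        have h2 := Metric.tendsto_nhds.mp (hg.continuousAt (x := a)) (2 * π) Real.two_pi_pos
        simpa [Real.dist_eq] using h2
      filter_upwards [hev] with b hb
      obtain ⟨n, hn⟩ := h b
      obtain ⟨m, hm⟩ := h a
      have hnm : n = m := by
        by_contra hne
        have h1 : (1 : ℝ) ≤ |((n - m : ℤ) : ℝ)| := by
          exact_mod_cast Int.one_le_abs (sub_ne_zero.2 hne)
        have h2 : |g b - g a| = |((n - m : ℤ) : ℝ)| * (2 * π) := by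
          rw [hn, hm, ← sub_mul, abs_mul, abs_of_pos Real.two_pi_pos]
          push_cast
          ring_nf
        nlinarith [Real.two_pi_pos]
      show g b = g 0
      rw [hn, hnm, ← hm, ha]
  have := hU.eq_univ ⟨0, rfl⟩
  exact Set.eq_univ_iff_forall.mp this t

section LiftTheory

variable (Q : unitInterval → ℝ → Circle)

def IsLift (s : unitInterval) (θ : ℝ → ℝ) : Prop :=
  Continuous θ ∧ ∀ t, Circle.exp (θ t) = Q s t

def EvenSet : Set unitInterval :=
  {s | ∃ θ, ∃ n : ℤ, IsLift Q s θ ∧ Even n ∧ θ 0 + θ π = n * (2 * π)}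

/-- Transfer a lift (with its index) from `s` to a nearby `s'`. -/
lemma transfer (hanti : ∀ s t, Q s (t + π) = (Q s t)⁻¹) {s s' : unitInterval} (hne : ∀ t, Q s' t ≠ negOne * Q s t)
    (hQs' : Continuous (Q s')) (hQs : Continuous (Q s))
    {θ : ℝ → ℝ} {n : ℤ} (hθ : IsLift Q s θ) (hsum : θ 0 + θ π = n * (2 * π)) :
    ∃ θ', IsLift Q s' θ' ∧ θ' 0 + θ' π = n * (2 * π) := by
  set r : ℝ → Circle := fun t => Q s' t * (Q s t)⁻¹ with hr
  have hrne : ∀ t, r t ≠ negOne := by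
    intro t h
    apply hne t
    have h2 : Q s' t * (Q s t)⁻¹ * Q s t = negOne * Q s t := by rw [← h]
    rwa [inv_mul_cancel_right] at h2
  have hrc : Continuous r := hQs'.mul hQs.inv
  refine ⟨fun t => θ t + Complex.arg (r t), ⟨hθ.1.add (continuous_arg_comp hrc hrne), ?_⟩, ?_⟩
  · intro t
    rw [Circle.exp_add, hθ.2 t, Circle.exp_arg (r t)]
    simp only [hr]
    rw [mul_comm, inv_mul_cancel_right]
  · have hrπ : r π = (r 0)⁻¹ := by
      have e1 := hanti s' 0
      have e2 := hanti s 0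
      rw [zero_add] at e1 e2
      simp only [hr, e1, e2]
      rw [mul_inv, inv_inv, mul_comm]
    have : Complex.arg (r π) = - Complex.arg (r 0) := by
      rw [hrπ]; exact arg_inv_circle (hrne 0)
    show θ 0 + Complex.arg (r 0) + (θ π + Complex.arg (r π)) = _
    rw [this]
    linarith [hsum]

lemma parity_unique {s : unitInterval} {θ θ' : ℝ → ℝ} {n n' : ℤ}
    (hθ : IsLift Q s θ) (hθ' : IsLift Q s θ')
    (hs : θ 0 + θ π = n * (2 * π)) (hs' : θ' 0 + θ' π = n' * (2 * π))
    (hev : Even n) : Even n' := by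
  set δ : ℝ → ℝ := fun t => θ' t - θ t with hδ
  have hδc : Continuous δ := hθ'.1.sub hθ.1
  have hδint : ∀ t, ∃ m : ℤ, δ t = m * (2 * π) := by
    intro t
    apply Circle.exp_eq_one.mp
    rw [hδ]
    simp only
    rw [Circle.exp_sub, hθ'.2 t, hθ.2 t, div_self']
  obtain ⟨m, hm⟩ := hδint 0
  have hπ0 : δ π = δ 0 := eq_of_continuous_int_mul hδc hδint π
  have e : (n' : ℝ) * (2 * π) = ((n + 2 * m : ℤ) : ℝ) * (2 * π) := by
    have e0 : θ' 0 + θ' π = (θ 0 + θ π) + (δ 0 + δ π) := by simp [hδ]; ring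
    rw [hs', hs, hπ0, hm] at e0
    push_cast
    linarith
  have e2 : n' = n + 2 * m := by
    have := mul_right_cancel₀ (ne_of_gt Real.two_pi_pos) e
    exact_mod_cast this
  rw [e2]
  exact hev.add (even_two_mul m)

end LiftTheory

lemma aux (p : ℤ) (hp : Even p) (f : C(Circle, Circle))
    (H : ContinuousMap.Homotopy f ⟨fun z => z ^ p, by continuity⟩)
    (hco : ∀ z : Circle, f z ≠ f (negOne * z)) : False := by
  have hQccont : Continuous fun su : unitInterval × Circle =>
      H su * (H (su.1, negOne * su.2))⁻¹ :=
    H.continuous.mul ((H.continuous.comp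
      (continuous_fst.prodMk (continuous_const.mul continuous_snd))).inv)
  set Q : unitInterval → ℝ → Circle := fun s t =>
    H (s, Circle.exp t) * (H (s, negOne * Circle.exp t))⁻¹ with hQdef
  have hQc2 : Continuous fun st : unitInterval × ℝ => Q st.1 st.2 :=
    hQccont.comp (continuous_fst.prodMk (Circle.exp.continuous.comp continuous_snd))
  have hQt : ∀ s, Continuous (Q s) := fun s =>
    hQc2.comp (continuous_const.prodMk continuous_id)
  have hexpπ : ∀ t : ℝ, Circle.exp (t + π) = negOne * Circle.exp t := by
    intro t; rw [Circle.exp_add, mul_comm]; rfl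
  have hanti : ∀ s t, Q s (t + π) = (Q s t)⁻¹ := by
    intro s t
    show H (s, Circle.exp (t + π)) * (H (s, negOne * Circle.exp (t + π)))⁻¹ = _
    rw [hexpπ t, ← mul_assoc, negOne_mul_negOne, one_mul]
    show _ = (H (s, Circle.exp t) * (H (s, negOne * Circle.exp t))⁻¹)⁻¹
    rw [mul_inv, inv_inv, mul_comm]
  -- tube lemma neighbourhoods
  have hnbhd : ∀ s : unitInterval, ∃ U : Set unitInterval, IsOpen U ∧ s ∈ U ∧
      ∀ s' ∈ U, ∀ t, Q s' t ≠ negOne * Q s t := by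
    intro s
    set b : unitInterval × Circle → Circle :=
      fun x => negOne * (H (s, x.2) * (H (s, negOne * x.2))⁻¹) with hb
    have hbc : Continuous b :=
      continuous_const.mul (hQccont.comp (continuous_const.prodMk continuous_snd))
    set W : Set (unitInterval × Circle) :=
      {x | (H x * (H (x.1, negOne * x.2))⁻¹) = b x}ᶜ with hW
    have hWopen : IsOpen W := (isClosed_eq hQccont hbc).isOpen_compl
    have hsub : {s} ×ˢ (Set.univ : Set Circle) ⊆ W := by
      rintro ⟨s₁, z⟩ ⟨hs₁, -⟩
      simp only [Set.mem_singleton_iff] at hs₁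
      subst hs₁
      intro hx
      have h1 : negOne = 1 := (right_eq_mul).mp hx
      have hc : ((negOne : Circle) : ℂ) = 1 := by rw [h1]; rfl
      rw [coe_negOne] at hc
      norm_num at hc
    obtain ⟨u, v, hu, hv, hsu, hvv, huv⟩ :=
      generalized_tube_lemma isCompact_singleton isCompact_univ hWopen hsub
    refine ⟨u, hu, hsu rfl, fun s' hs' t h => ?_⟩
    exact huv (Set.mk_mem_prod hs' (hvv (Set.mem_univ (Circle.exp t)))) h
  -- clopen argument
  set S : Set unitInterval := EvenSet Q with hS
  have hopen : IsOpen S := by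
    rw [isOpen_iff_mem_nhds]
    intro s hs
    obtain ⟨U, hUo, hsU, hU⟩ := hnbhd s
    refine Filter.mem_of_superset (hUo.mem_nhds hsU) ?_
    intro s' hs'
    obtain ⟨θ, n, hθ, hn, hsum⟩ := hs
    obtain ⟨θ', hθ', hsum'⟩ := transfer Q hanti (hU s' hs') (hQt s') (hQt s) hθ hsum
    exact ⟨θ', n, hθ', hn, hsum'⟩
  have hcopen : IsOpen Sᶜ := by
    rw [isOpen_iff_mem_nhds]
    intro s hs
    obtain ⟨U, hUo, hsU, hU⟩ := hnbhd s
    refine Filter.mem_of_superset (hUo.mem_nhds hsU) ?_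
    intro s' hs' hs'S
    obtain ⟨θ', n, hθ', hn, hsum'⟩ := hs'S
    have hsym : ∀ t, Q s t ≠ negOne * Q s' t := by
      intro t h
      apply hU s' hs' t
      rw [h, ← mul_assoc, negOne_mul_negOne, one_mul]
    obtain ⟨θ, hθ, hsum⟩ := transfer Q hanti hsym (hQt s) (hQt s') hθ' hsum'
    exact hs ⟨θ, n, hθ, hn, hsum⟩
  have hone : (1 : unitInterval) ∈ S := by
    have hnegp : negOne ^ p = 1 := by
      obtain ⟨k, hk⟩ := hp
      rw [hk, ← two_mul, zpow_mul]
      have h2 : negOne ^ (2 : ℤ) = 1 := by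
        rw [zpow_two, negOne_mul_negOne]
      rw [h2, one_zpow]
    have hQ1 : ∀ t, Q (1 : unitInterval) t = 1 := by
      intro t
      show H (1, Circle.exp t) * (H (1, negOne * Circle.exp t))⁻¹ = 1
      rw [H.apply_one, H.apply_one]
      show Circle.exp t ^ p * ((negOne * Circle.exp t) ^ p)⁻¹ = 1
      rw [mul_zpow, hnegp, one_mul, mul_inv_eq_one]
    refine ⟨fun _ => 0, 0, ⟨continuous_const, fun t => ?_⟩, Even.zero, by simp⟩
    rw [Circle.exp_zero, hQ1]
  -- connectedness
  have hSuniv : S = Set.univ := by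
    have hclopen : IsClopen S := ⟨isOpen_compl_iff.mp hcopen, hopen⟩
    exact hclopen.eq_univ ⟨(1 : unitInterval), hone⟩
  have hzero : (0 : unitInterval) ∈ S := hSuniv ▸ Set.mem_univ _
  obtain ⟨θ, n, hθ, hn, hsum⟩ := hzero
  -- explicit odd lift at s = 0
  have hQ0ne1 : ∀ t, Q (0 : unitInterval) t ≠ 1 := by
    intro t h
    have h0 : Q (0 : unitInterval) t
        = f (Circle.exp t) * (f (negOne * Circle.exp t))⁻¹ := by
      show H (0, Circle.exp t) * (H (0, negOne * Circle.exp t))⁻¹ = _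
      rw [H.apply_zero, H.apply_zero]
    rw [h0, mul_inv_eq_one] at h
    exact hco (Circle.exp t) h
  set A : ℝ → Circle := fun t => negOne * Q 0 t with hA
  have hAne : ∀ t, A t ≠ negOne := by
    intro t h
    simp only [hA] at h
    exact hQ0ne1 t (mul_left_cancel (a := negOne) (by rw [mul_one]; exact h))
  have hAc : Continuous A := continuous_const.mul (hQt 0)
  set θ₀ : ℝ → ℝ := fun t => Complex.arg (A t) + π with hθ₀
  have hlift : IsLift Q 0 θ₀ := by
    refine ⟨(continuous_arg_comp hAc hAne).add continuous_const, fun t => ?_⟩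
    show Circle.exp (Complex.arg (A t) + π) = Q 0 t
    rw [Circle.exp_add, Circle.exp_arg (A t)]
    show A t * negOne = Q 0 t
    rw [hA]
    show negOne * Q 0 t * negOne = Q 0 t
    rw [mul_comm negOne (Q 0 t), mul_assoc, negOne_mul_negOne, mul_one]
  have hsum₀ : θ₀ 0 + θ₀ π = (1 : ℤ) * (2 * π) := by
    have hQπ : Q (0 : unitInterval) π = (Q 0 0)⁻¹ := by
      have := hanti 0 0
      rwa [zero_add] at this
    have hAπ : A π = (A 0)⁻¹ := by
      rw [hA]
      show negOne * Q 0 π = (negOne * Q 0 0)⁻¹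
      rw [hQπ, show (negOne * Q 0 0)⁻¹ = negOne⁻¹ * (Q 0 0)⁻¹ from mul_inv _ _, inv_negOne]
    have harg : Complex.arg (A π) = - Complex.arg (A 0) := by
      rw [hAπ]
      exact arg_inv_circle (hAne 0)
    show Complex.arg (A 0) + π + (Complex.arg (A π) + π) = (1 : ℤ) * (2 * π)
    rw [harg]
    push_cast
    ring
  have := parity_unique Q hθ hlift hsum hsum₀ hn
  obtain ⟨r, hr⟩ := this
  omega

lemma antipode_eq (z : Circle) : circleAntipode z = negOne * z := by
  ext
  show -(z : ℂ) = ((negOne * z : Circle) : ℂ)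
  rw [Circle.coe_mul, coe_negOne]
  ring

end BorsukUlamAux

/-- **Borsuk–Ulam property holds for even-degree classes of self-maps of the circle.**
If `p` is an even integer, then every continuous self-map of the circle homotopic to
`z ↦ z ^ p` has a point `z` with `f z = f (-z)`. -/
theorem borsukUlam_circle_even_degree (p : ℤ) (hp : Even p) (f : C(Circle, Circle))
    (h : f.Homotopic ⟨fun z => z ^ p, by continuity⟩) :
    ∃ z : Circle, f z = f (circleAntipode z) := by
  by_contra hc
  push_neg at hc
  obtain ⟨H⟩ := h
  exact BorsukUlamAux.aux p hp f H fun z => by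
    have := hc z
    rwa [BorsukUlamAux.antipode_eq] at this
end

section
/- Let B be a group, θ : B → ℤ/2 a group homomorphism, σ ∈ B with θ(σ) = 1, and λ₁, …, λ_k ∈ B with θ(λ_i) = 0 for all i. Set ρ = σ² and λ'_i = σ·λ_i·σ⁻¹, all of which lie in P = ker θ. Let F_k be the free group on generators z₁, …, z_k and suppose p₁ : P → F_k is a group homomorphism satisfying p₁(ρ) = 1, p₁(λ_i) = 1 and p₁(λ'_i) = z_i for all i = 1, …, k. Then for every choice of elements w, w₁, w'₁, …, w_m, w'_m of F_k there is a group homomorphism ψ from the free group on generators c, c₁, …, c_m to B, given by ψ(c) = w(λ)·σ and ψ(c_i) = σ·w_i(λ)·σ⁻¹·w'_i(λ), such that θ(ψ(c)) = 1, θ(ψ(c_i)) = 0 for all i, and moreover ψ(c²), ψ(c_i), ψ(c·c_i·c⁻¹) all lie in P with p₁(ψ(c²)) = w(z), p₁(ψ(c_i)) = w_i(z), and p₁(ψ(c·c_i·c⁻¹)) = w'_i(z). -/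
/-- **Computational core of Theorem 1, essential-vertex case.**
Let `θ : B → ℤ/2`, `σ ∈ B` with `θ σ = 1`, and `λ₁, …, λ_k ∈ P = ker θ`.  Set `ρ = σ²` and
`λ'ᵢ = σ·λᵢ·σ⁻¹` (both in `P`).  Suppose `p₁ : P → F_k` is a homomorphism to the free group
on `z₁, …, z_k` with `p₁ ρ = 1`, `p₁ λᵢ = 1` and `p₁ λ'ᵢ = zᵢ`.  Then for all words
`w, wᵢ, w'ᵢ ∈ F_k` there is a homomorphism `ψ` from the free group on `c, c₁, …, c_m`
(generators indexed by `Option (Fin m)`, with `c` indexed by `none`) to `B`, given by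
`ψ c = w(λ)·σ` and `ψ cᵢ = σ·wᵢ(λ)·σ⁻¹·w'ᵢ(λ)`, such that `θ (ψ c) = 1`, `θ (ψ cᵢ) = 0`,
the elements `ψ (c²)`, `ψ cᵢ`, `ψ (c·cᵢ·c⁻¹)` lie in `P`, and their `p₁`-images are
`w(z)`, `wᵢ(z)`, `w'ᵢ(z)` respectively. -/
theorem braid_lifting_essential_vertex_case (k m : ℕ) {B : Type*} [Group B]
    (θ : B →* Multiplicative (ZMod 2))
    (σ : B) (hσ : θ σ = Multiplicative.ofAdd 1)
    (lam : Fin k → B) (hlam_mem : ∀ i, lam i ∈ θ.ker)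
    (hρ_mem : σ ^ 2 ∈ θ.ker)
    (hlam'_mem : ∀ i, σ * lam i * σ⁻¹ ∈ θ.ker)
    (p₁ : θ.ker →* FreeGroup (Fin k))
    (hρ : p₁ ⟨σ ^ 2, hρ_mem⟩ = 1)
    (hlam : ∀ i, p₁ ⟨lam i, hlam_mem i⟩ = 1)
    (hlam' : ∀ i, p₁ ⟨σ * lam i * σ⁻¹, hlam'_mem i⟩ = FreeGroup.of i)
    (w : FreeGroup (Fin k)) (wi wi' : Fin m → FreeGroup (Fin k)) :
    ∃ ψ : FreeGroup (Option (Fin m)) →* B,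
      ψ (FreeGroup.of none) = FreeGroup.lift lam w * σ ∧
      (∀ i : Fin m, ψ (FreeGroup.of (some i)) =
        σ * FreeGroup.lift lam (wi i) * σ⁻¹ * FreeGroup.lift lam (wi' i)) ∧
      θ (ψ (FreeGroup.of none)) = Multiplicative.ofAdd 1 ∧
      (∀ i : Fin m, θ (ψ (FreeGroup.of (some i))) = 1) ∧
      (∃ h : ψ (FreeGroup.of none ^ 2) ∈ θ.ker,
        p₁ ⟨ψ (FreeGroup.of none ^ 2), h⟩ = w) ∧
      (∀ i : Fin m, ∃ h : ψ (FreeGroup.of (some i)) ∈ θ.ker,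
        p₁ ⟨ψ (FreeGroup.of (some i)), h⟩ = wi i) ∧
      (∀ i : Fin m, ∃ h : ψ (FreeGroup.of none * FreeGroup.of (some i) *
          (FreeGroup.of (none : Option (Fin m)))⁻¹) ∈ θ.ker,
        p₁ ⟨ψ (FreeGroup.of none * FreeGroup.of (some i) *
          (FreeGroup.of (none : Option (Fin m)))⁻¹), h⟩ = wi' i) := by
  set L : FreeGroup (Fin k) →* B := FreeGroup.lift lam with hL
  -- q : F_k →* P, u ↦ u(λ)
  set q : FreeGroup (Fin k) →* θ.ker :=
    FreeGroup.lift (fun i => (⟨lam i, hlam_mem i⟩ : θ.ker)) with hq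
  have qval : ∀ u, ((q u : B)) = L u := by
    intro u
    have : θ.ker.subtype.comp q = L := by
      apply FreeGroup.ext_hom; intro a; simp [q, L]
    exact DFunLike.congr_fun this u
  have qp : ∀ u, p₁ (q u) = 1 := by
    intro u
    have : p₁.comp q = 1 := by
      apply FreeGroup.ext_hom; intro a; simp [q, hlam a]
    exact DFunLike.congr_fun this u
  -- r : F_k →* P, u ↦ σ u(λ) σ⁻¹
  set r : FreeGroup (Fin k) →* θ.ker :=
    FreeGroup.lift (fun i => (⟨σ * lam i * σ⁻¹, hlam'_mem i⟩ : θ.ker)) with hr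
  have rval : ∀ u, ((r u : B)) = σ * L u * σ⁻¹ := by
    intro u
    have : θ.ker.subtype.comp r = ((MulAut.conj σ).toMonoidHom.comp L) := by
      apply FreeGroup.ext_hom; intro a
      simp [r, L, MulAut.conj]
    have h2 := DFunLike.congr_fun this u
    simpa [MulAut.conj] using h2
  have rp : ∀ u, p₁ (r u) = u := by
    intro u
    have : p₁.comp r = MonoidHom.id _ := by
      apply FreeGroup.ext_hom; intro a; simp [r, hlam' a]
    exact DFunLike.congr_fun this u
  have θL : ∀ u, θ (L u) = 1 := by
    intro u
    have : θ.comp L = 1 := by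
      apply FreeGroup.ext_hom; intro a
      simpa [L] using hlam_mem a
    exact DFunLike.congr_fun this u
  set ρP : θ.ker := ⟨σ ^ 2, hρ_mem⟩ with hρP
  -- the homomorphism ψ
  refine ⟨FreeGroup.lift (fun x => Option.rec (L w * σ)
      (fun i => σ * L (wi i) * σ⁻¹ * L (wi' i)) x), ?_, ?_, ?_, ?_, ?_, ?_, ?_⟩
  · simp
  · intro i; simp
  · simp [θL, hσ]
  · intro i
    have : θ σ⁻¹ = (θ σ)⁻¹ := map_inv θ σ
    simp [θL, hσ, this]
  · -- ψ (c^2)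
    set E : θ.ker := q w * r w * ρP with hE
    have hval : (E : B) = (FreeGroup.lift (fun x => Option.rec (L w * σ)
        (fun i => σ * L (wi i) * σ⁻¹ * L (wi' i)) x)) (FreeGroup.of none ^ 2) := by
      push_cast [hE]
      simp [qval, rval, ρP, sq]
      group
    refine ⟨hval ▸ E.2, ?_⟩
    have : (⟨_, hval ▸ E.2⟩ : θ.ker) = E := Subtype.ext hval.symm
    rw [this, hE]
    simp [qp, rp, hρP, hρ]
    exact hρ
  · intro i
    set E : θ.ker := r (wi i) * q (wi' i) with hE
    have hval : (E : B) = (FreeGroup.lift (fun x => Option.rec (L w * σ)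
        (fun j => σ * L (wi j) * σ⁻¹ * L (wi' j)) x)) (FreeGroup.of (some i)) := by
      push_cast [hE]
      simp [qval, rval]
    refine ⟨hval ▸ E.2, ?_⟩
    have : (⟨_, hval ▸ E.2⟩ : θ.ker) = E := Subtype.ext hval.symm
    rw [this, hE]
    simp [qp, rp]
  · intro i
    set E : θ.ker := q w * ρP * q (wi i) * ρP⁻¹ * r (wi' i) * (q w)⁻¹ with hE
    have hval : (E : B) = (FreeGroup.lift (fun x => Option.rec (L w * σ)
        (fun j => σ * L (wi j) * σ⁻¹ * L (wi' j)) x)) (FreeGroup.of none *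
        FreeGroup.of (some i) * (FreeGroup.of (none : Option (Fin m)))⁻¹) := by
      push_cast [hE]
      simp [qval, rval, ρP, sq]
      group
    refine ⟨hval ▸ E.2, ?_⟩
    have : (⟨_, hval ▸ E.2⟩ : θ.ker) = E := Subtype.ext hval.symm
    rw [this, hE]
    simp [qp, rp, hρP, hρ]
end

section
/- Let k ≥ 1, let B be a group, θ : B → ℤ/2 a group homomorphism, σ ∈ B with θ(σ) = 1, and λ₁, …, λ_k ∈ B with θ(λ_i) = 0 for all i. Set ρ = σ² and λ'_i = σ·λ_i·σ⁻¹, all of which lie in P = ker θ. Let F_k be the free group on generators z₁, …, z_k and suppose p₁ : P → F_k is a group homomorphism satisfying p₁(ρ) = z₁, p₁(λ_i) = 1 for all i, p₁(λ'₁) = z₁, and p₁(λ'_i) = z_i·z₁⁻¹ for i = 2, …, k. Then for every choice of elements w, w₁, w'₁, …, w_m, w'_m of F_k there exists a group homomorphism ψ from the free group on generators c, c₁, …, c_m to B such that θ(ψ(c)) = 1, θ(ψ(c_i)) = 0 for all i, and ψ(c²), ψ(c_i), ψ(c·c_i·c⁻¹) all lie in P with p₁(ψ(c²)) = w, p₁(ψ(c_i))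 = w_i, and p₁(ψ(c·c_i·c⁻¹)) = w'_i. -/
/-!
Let `u ↦ u(λ)` substitute the `λᵢ` into words and put `ρ = σ²`. For words `ℓ, aᵢ, bᵢ` take
`ψ(c) = ℓ(λ)·σ` and `ψ(cᵢ) = (σ·aᵢ(λ)·σ⁻¹)·bᵢ(λ)`. Since `p₁` kills every `u(λ)`,
`p₁ ψ(c²) = p₁(σ ℓ(λ) σ⁻¹)·p₁(ρ)`, `p₁ ψ(cᵢ) = p₁(σ aᵢ(λ) σ⁻¹)` and, writing
`ψ(c cᵢ c⁻¹) = ℓ(λ)·ρ·aᵢ(λ)·ρ⁻¹·(σ bᵢ(λ) σ⁻¹)·ℓ(λ)⁻¹`, also `p₁ ψ(c cᵢ c⁻¹) = p₁(σ bᵢ(λ) σ⁻¹)`.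
So it suffices that `u ↦ p₁(σ u(λ) σ⁻¹)` be onto `F_k`, and it is: its image contains `z₁` and
`zᵢ z₁⁻¹`, hence every generator.
-/

theorem FreeGroup.surjective_of_forall_of_mem_range {α G : Type*} [Group G]
    (f : G →* FreeGroup α) (h : ∀ a, FreeGroup.of a ∈ f.range) : Function.Surjective f := by
  rw [← MonoidHom.range_eq_top, eq_top_iff, ← closure_range_of, Subgroup.closure_le]
  rintro _ ⟨a, rfl⟩
  exact h a

open FreeGroup (of lift lift_apply_of ext_hom surjective_of_forall_of_mem_range)

theorem Subgroup.exists_mem_apply_eq_of_coe_eq {B H : Type*} [Group B] [Group H]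
    {P : Subgroup B} (p : P →* H) {b : B} {h : H} (a : P) (hab : (a : B) = b) (hpa : p a = h) :
    ∃ hb : b ∈ P, p ⟨b, hb⟩ = h := by
  subst hab
  exact ⟨a.2, hpa⟩

theorem exists_freeGroup_hom_prescribed_images {B G H ι : Type*} [Group B] [Group G] [Group H]
    {P : Subgroup B} [P.Normal] (p : P →* H) {σ : B} (hσ : σ ^ 2 ∈ P) (Λ : G →* P)
    (hΛ : ∀ g, p (Λ g) = 1)
    (hsurj : Function.Surjective (p.comp ((MulAut.conjNormal σ).toMonoidHom.comp Λ)))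
    (w : H) (wi wi' : ι → H) :
    ∃ ψ : FreeGroup (Option ι) →* B, ψ (of none) * σ⁻¹ ∈ P ∧
      (∃ h : ψ (of none ^ 2) ∈ P, p ⟨_, h⟩ = w) ∧
      (∀ i, ∃ h : ψ (of (some i)) ∈ P, p ⟨_, h⟩ = wi i) ∧
      (∀ i, ∃ h : ψ (of none * of (some i) * (of none)⁻¹) ∈ P, p ⟨_, h⟩ = wi' i) := by
  set ρ : P := ⟨σ ^ 2, hσ⟩
  obtain ⟨ℓ, hℓ⟩ := hsurj (w * (p ρ)⁻¹)
  choose a ha using fun i => hsurj (wi i)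
  choose b hb using fun i => hsurj (wi' i)
  let ψ : FreeGroup (Option ι) →* B :=
    lift fun o => o.elim (Λ ℓ * σ) fun i => σ * Λ (a i) * σ⁻¹ * Λ (b i)
  have hψc : ψ (of none) = Λ ℓ * σ := lift_apply_of
  have hψci : ∀ i, ψ (of (some i)) = σ * Λ (a i) * σ⁻¹ * Λ (b i) := fun _ => lift_apply_of
  refine ⟨ψ, ?_, ?_, fun i => ?_, fun i => ?_⟩
  · simp [hψc]
  · refine Subgroup.exists_mem_apply_eq_of_coe_eq p
      (Λ ℓ * MulAut.conjNormal σ (Λ ℓ) * ρ) ?_ ?_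
    · simp [hψc, ρ, sq, mul_assoc]
    · rw [map_mul, map_mul, hΛ, one_mul]
      exact (congrArg (· * p ρ) hℓ).trans (inv_mul_cancel_right w (p ρ))
  · refine Subgroup.exists_mem_apply_eq_of_coe_eq p
      (MulAut.conjNormal σ (Λ (a i)) * Λ (b i)) ?_ ?_
    · simp only [Subgroup.coe_mul, MulAut.conjNormal_apply, hψci]
    · rw [map_mul, hΛ, mul_one]
      exact ha i
  · refine Subgroup.exists_mem_apply_eq_of_coe_eq p
      (Λ ℓ * ρ * Λ (a i) * ρ⁻¹ * MulAut.conjNormal σ (Λ (b i)) * (Λ ℓ)⁻¹) ?_ ?_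
    · simp [hψc, hψci, ρ, sq, mul_assoc]
    · simp only [map_mul, map_inv, hΛ, one_mul, mul_one, inv_one, mul_inv_cancel]
      exact hb i

theorem braid_lifting_linear_tree_case_general (k m : ℕ) (hk : 1 ≤ k) {B : Type*} [Group B]
    (θ : B →* Multiplicative (ZMod 2))
    (σ : B) (hσ : θ σ = Multiplicative.ofAdd 1)
    (lam : Fin k → B) (hlam_mem : ∀ i, lam i ∈ θ.ker)
    (hρ_mem : σ ^ 2 ∈ θ.ker)
    (hlam'_mem : ∀ i, σ * lam i * σ⁻¹ ∈ θ.ker)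
    (p₁ : θ.ker →* FreeGroup (Fin k))
    (hlam : ∀ i, p₁ ⟨lam i, hlam_mem i⟩ = 1)
    (hlam'₁ : p₁ ⟨σ * lam ⟨0, hk⟩ * σ⁻¹, hlam'_mem ⟨0, hk⟩⟩ = FreeGroup.of ⟨0, hk⟩)
    (hlam' : ∀ i, i ≠ (⟨0, hk⟩ : Fin k) →
      p₁ ⟨σ * lam i * σ⁻¹, hlam'_mem i⟩ =
        FreeGroup.of i * (FreeGroup.of (⟨0, hk⟩ : Fin k))⁻¹)
    (w : FreeGroup (Fin k)) (wi wi' : Fin m → FreeGroup (Fin k)) :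
    ∃ ψ : FreeGroup (Option (Fin m)) →* B,
      θ (ψ (FreeGroup.of none)) = Multiplicative.ofAdd 1 ∧
      (∀ i : Fin m, θ (ψ (FreeGroup.of (some i))) = 1) ∧
      (∃ h : ψ (FreeGroup.of none ^ 2) ∈ θ.ker,
        p₁ ⟨ψ (FreeGroup.of none ^ 2), h⟩ = w) ∧
      (∀ i : Fin m, ∃ h : ψ (FreeGroup.of (some i)) ∈ θ.ker,
        p₁ ⟨ψ (FreeGroup.of (some i)), h⟩ = wi i) ∧
      (∀ i : Fin m, ∃ h : ψ (FreeGroup.of none * FreeGroup.of (some i) *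
          (FreeGroup.of (none : Option (Fin m)))⁻¹) ∈ θ.ker,
        p₁ ⟨ψ (FreeGroup.of none * FreeGroup.of (some i) *
          (FreeGroup.of (none : Option (Fin m)))⁻¹), h⟩ = wi' i) := by
  set o : Fin k := ⟨0, hk⟩
  let Λ : FreeGroup (Fin k) →* θ.ker := lift fun i => ⟨lam i, hlam_mem i⟩
  have hΛ : ∀ g, p₁ (Λ g) = 1 := by
    have : p₁.comp Λ = 1 := ext_hom _ _ fun i => by simp [Λ, hlam]
    exact DFunLike.congr_fun this
  have hconjΛ : ∀ i, MulAut.conjNormal σ (Λ (of i)) = ⟨σ * lam i * σ⁻¹, hlam'_mem i⟩ :=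
    fun i => Subtype.ext (by simp [Λ])
  have hsurj : Function.Surjective (p₁.comp ((MulAut.conjNormal σ).toMonoidHom.comp Λ)) := by
    refine surjective_of_forall_of_mem_range _ fun i => ?_
    by_cases hi : i = o
    · exact ⟨of o, by
        simp only [MonoidHom.comp_apply, MulEquiv.coe_toMonoidHom, hconjΛ, hlam'₁, hi]⟩
    · exact ⟨of i * of o, by
        simp only [map_mul, MonoidHom.comp_apply, MulEquiv.coe_toMonoidHom, hconjΛ, hlam' i hi,
          hlam'₁, inv_mul_cancel_right]⟩
  obtain ⟨ψ, hc, hc2, hci, hcci⟩ :=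
    exists_freeGroup_hom_prescribed_images p₁ hρ_mem Λ hΛ hsurj w wi wi'
  refine ⟨ψ, ?_, fun i => MonoidHom.mem_ker.1 (hci i).1, hc2, hci, hcci⟩
  calc θ (ψ (of none)) = θ (ψ (of none) * σ⁻¹) * θ σ := by simp
    _ = Multiplicative.ofAdd 1 := by rw [MonoidHom.mem_ker.1 hc, one_mul, hσ]

/-- **Computational core of Theorem 1, linear-tree case.**
Let `k ≥ 1`, `θ : B → ℤ/2`, `σ ∈ B` with `θ σ = 1`, and `λ₁, …, λ_k ∈ P = ker θ`.
Set `ρ = σ²` and `λ'ᵢ = σ·λᵢ·σ⁻¹` (both in `P`).  Suppose `p₁ : P → F_k` is a homomorphism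
to the free group on `z₁, …, z_k` with `p₁ ρ = z₁`, `p₁ λᵢ = 1` for all `i`,
`p₁ λ'₁ = z₁`, and `p₁ λ'ᵢ = zᵢ·z₁⁻¹` for `i ≥ 2`.  Then for all words
`w, wᵢ, w'ᵢ ∈ F_k` there is a homomorphism `ψ` from the free group on `c, c₁, …, c_m`
(generators indexed by `Option (Fin m)`, with `c` indexed by `none`) to `B` such that
`θ (ψ c) = 1`, `θ (ψ cᵢ) = 0`, the elements `ψ (c²)`, `ψ cᵢ`, `ψ (c·cᵢ·c⁻¹)` lie in `P`,
and their `p₁`-images are `w`, `wᵢ`, `w'ᵢ` respectively. -/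
theorem braid_lifting_linear_tree_case (k m : ℕ) (hk : 1 ≤ k) {B : Type*} [Group B]
    (θ : B →* Multiplicative (ZMod 2))
    (σ : B) (hσ : θ σ = Multiplicative.ofAdd 1)
    (lam : Fin k → B) (hlam_mem : ∀ i, lam i ∈ θ.ker)
    (hρ_mem : σ ^ 2 ∈ θ.ker)
    (hlam'_mem : ∀ i, σ * lam i * σ⁻¹ ∈ θ.ker)
    (p₁ : θ.ker →* FreeGroup (Fin k))
    (hρ : p₁ ⟨σ ^ 2, hρ_mem⟩ = FreeGroup.of ⟨0, hk⟩)
    (hlam : ∀ i, p₁ ⟨lam i, hlam_mem i⟩ = 1)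
    (hlam'₁ : p₁ ⟨σ * lam ⟨0, hk⟩ * σ⁻¹, hlam'_mem ⟨0, hk⟩⟩ = FreeGroup.of ⟨0, hk⟩)
    (hlam' : ∀ i, i ≠ (⟨0, hk⟩ : Fin k) →
      p₁ ⟨σ * lam i * σ⁻¹, hlam'_mem i⟩ =
        FreeGroup.of i * (FreeGroup.of (⟨0, hk⟩ : Fin k))⁻¹)
    (w : FreeGroup (Fin k)) (wi wi' : Fin m → FreeGroup (Fin k)) :
    ∃ ψ : FreeGroup (Option (Fin m)) →* B,
      θ (ψ (FreeGroup.of none)) = Multiplicative.ofAdd 1 ∧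
      (∀ i : Fin m, θ (ψ (FreeGroup.of (some i))) = 1) ∧
      (∃ h : ψ (FreeGroup.of none ^ 2) ∈ θ.ker,
        p₁ ⟨ψ (FreeGroup.of none ^ 2), h⟩ = w) ∧
      (∀ i : Fin m, ∃ h : ψ (FreeGroup.of (some i)) ∈ θ.ker,
        p₁ ⟨ψ (FreeGroup.of (some i)), h⟩ = wi i) ∧
      (∀ i : Fin m, ∃ h : ψ (FreeGroup.of none * FreeGroup.of (some i) *
          (FreeGroup.of (none : Option (Fin m)))⁻¹) ∈ θ.ker,
        p₁ ⟨ψ (FreeGroup.of none * FreeGroup.of (some i) *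
          (FreeGroup.of (none : Option (Fin m)))⁻¹), h⟩ = wi' i) :=
  braid_lifting_linear_tree_case_general k m hk θ σ hσ lam hlam_mem hρ_mem hlam'_mem p₁ hlam hlam'₁
    hlam' w wi wi'
end

section
/- Let Γ be a finite connected simple graph on a nonempty finite vertex set V admitting a free involution, i.e., a graph automorphism σ with σ(σ(v)) = v for all v, σ(v) ≠ v for all vertices v, and such that no vertex v is adjacent to σ(v) (so σ maps no edge to itself). Then the number of edges of Γ is at least the number of vertices; equivalently, the Euler characteristic χ(Γ) = |V| − |E| satisfies χ(Γ) ≤ 0. -/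
/-!
A free involution pairs off the vertices and, since it fixes no edge, also the edges, so `|V|`
and `|E|` are both even. A connected graph has `|V| ≤ |E| + 1`, and parity rules out equality.
-/

theorem Function.Involutive.even_card_of_forall_ne {α : Type*} [Fintype α] {f : α → α}
    (hf : Function.Involutive f) (hfree : ∀ x, f x ≠ x) : Even (Fintype.card α) := by
  classical
  have hsq : hf.toPerm f ^ 2 = 1 := Equiv.ext fun x => hf x
  have hsupport : (hf.toPerm f).support = Finset.univ :=
    Finset.eq_univ_of_forall fun x => Equiv.Perm.mem_support.2 (hfree x)
  rw [even_iff_two_dvd, ← Finset.card_univ, ← hsupport]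
  exact Equiv.Perm.two_dvd_card_support hsq

namespace SimpleGraph.Iso

variable {V : Type*} {G : SimpleGraph V}

theorem sym2Map_ne_of_mem_edgeSet (σ : G ≃g G) (hfree : ∀ v, σ v ≠ v)
    (hnoedge : ∀ v, ¬ G.Adj v (σ v)) {e : Sym2 V} (he : e ∈ G.edgeSet) : Sym2.map σ e ≠ e := by
  induction e with
  | _ a b =>
    rw [Sym2.map_mk, Ne, Sym2.eq_iff]
    rintro (⟨ha, -⟩ | ⟨-, hb⟩)
    · exact hfree a ha
    · exact hnoedge b (hb ▸ G.adj_symm he)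

theorem even_card_edgeSet [Fintype G.edgeSet] (σ : G ≃g G) (hinv : ∀ v, σ (σ v) = v)
    (hfree : ∀ v, σ v ≠ v) (hnoedge : ∀ v, ¬ G.Adj v (σ v)) :
    Even (Fintype.card G.edgeSet) := by
  refine Function.Involutive.even_card_of_forall_ne (f := σ.mapEdgeSet) (fun e => ?_) fun e => ?_
  · ext1
    simp [Sym2.map_map, hinv]
  · exact fun h => sym2Map_ne_of_mem_edgeSet σ hfree hnoedge e.2 (congrArg Subtype.val h)

end SimpleGraph.Iso

theorem euler_char_nonpos_of_connected_free_involution_general {V : Type*} [Fintype V]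
    (Γ : SimpleGraph V) [Fintype Γ.edgeSet]
    (hconn : Γ.Connected)
    (σ : Γ ≃g Γ)
    (hinv : ∀ v, σ (σ v) = v)
    (hfree : ∀ v, σ v ≠ v)
    (hnoedge : ∀ v, ¬ Γ.Adj v (σ v)) :
    Fintype.card V ≤ Γ.edgeFinset.card ∧
      (Fintype.card V : ℤ) - Γ.edgeFinset.card ≤ 0 := by
  obtain ⟨k, hV⟩ := Function.Involutive.even_card_of_forall_ne (f := σ) hinv hfree
  obtain ⟨m, hE⟩ := σ.even_card_edgeSet hinv hfree hnoedge
  have htree := hconn.card_vert_le_card_edgeSet_add_one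
  rw [Nat.card_eq_fintype_card, Nat.card_eq_fintype_card] at htree
  rw [SimpleGraph.edgeFinset_card]
  omega

/-- **Nonpositive Euler characteristic of a connected graph with a free involution.**
If a finite connected simple graph `Γ` on a nonempty vertex set admits a free
involution — an automorphism `σ` with `σ (σ v) = v`, `σ v ≠ v` for all `v`, and no
vertex adjacent to its image — then the number of edges is at least the number of
vertices; equivalently the Euler characteristic `|V| - |E|` is `≤ 0`. -/
theorem euler_char_nonpos_of_connected_free_involution {V : Type*} [Fintype V] [Nonempty V]
    (Γ : SimpleGraph V) [Fintype Γ.edgeSet]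
    (hconn : Γ.Connected)
    (σ : Γ ≃g Γ)
    (hinv : ∀ v, σ (σ v) = v)
    (hfree : ∀ v, σ v ≠ v)
    (hnoedge : ∀ v, ¬ Γ.Adj v (σ v)) :
    Fintype.card V ≤ Γ.edgeFinset.card ∧
      (Fintype.card V : ℤ) - Γ.edgeFinset.card ≤ 0 :=
  euler_char_nonpos_of_connected_free_involution_general Γ hconn σ hinv hfree hnoedge
end
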